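/- arXiv:2601.07428 — 2 statements merged into one kernel-verified Lean document; each statement's English description precedes it below -/
import Mathlib

section
/- For every ideal I on a countable set X: 𝔟 ≤ non(K_I) ≤ non(M_I) ≤ non(ℳ) and cov(ℳ) ≤ cov(M_I) ≤ cov(K_I) ≤ 𝔡, where ℳ is the meager ideal of the Polish space X^ω. -/
open Cardinal Filter Set
open scoped ENNReal

noncomputable section

/-- An ideal on a (countable) set `X`, in the sense of the paper: a proper family of
subsets of `X` closed under taking subsets and finite unions and containing all
finite subsets of `X`. -/
structure IsIdealOn {X : Type} (I : Set (Set X)) : Prop where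
  subset_mem : ∀ ⦃A B : Set X⦄, A ⊆ B → B ∈ I → A ∈ I
  union_mem : ∀ ⦃A B : Set X⦄, A ∈ I → B ∈ I → A ∪ B ∈ I
  finite_mem : ∀ ⦃A : Set X⦄, A.Finite → A ∈ I
  proper : (univ : Set X) ∉ I

/-- The finite initial segment `x ↾ n` of `x : X^ω`, as a list (an element of `X^{<ω}`). -/
def seg {X : Type} (x : ℕ → X) (n : ℕ) : List X := (List.range n).map x

/-- The `I`-Miller null ideal `M_I`: the σ-ideal on `X^ω` generated by the sets
`M_φ = {x | ∀^∞ n, x n ∈ φ (x ↾ n)}`, where `φ : X^{<ω} → I`.  (A set is in the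
generated σ-ideal iff it is covered by countably many generators.) -/
def MIdeal {X : Type} (I : Set (Set X)) : Set (Set (ℕ → X)) :=
  {A | ∃ φ : ℕ → List X → Set X, (∀ n s, φ n s ∈ I) ∧
    A ⊆ ⋃ n, {x : ℕ → X | ∀ᶠ m in atTop, x m ∈ φ n (seg x m)}}

/-- The σ-ideal `K_I` on `X^ω` generated by the sets
`K_φ = {x | ∀^∞ n, x n ∈ φ n}`, where `φ : ω → I`. -/
def KIdeal {X : Type} (I : Set (Set X)) : Set (Set (ℕ → X)) :=
  {A | ∃ φ : ℕ → ℕ → Set X, (∀ n m, φ n m ∈ I) ∧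
    A ⊆ ⋃ n, {x : ℕ → X | ∀ᶠ m in atTop, x m ∈ φ n m}}

/-- Additivity `add(J)` of a (σ-)ideal `J`: the least cardinality of a subfamily of `J`
whose union is not in `J`. -/
def addIdeal {Y : Type} (J : Set (Set Y)) : Cardinal :=
  sInf {c | ∃ 𝒜 : Set (Set Y), 𝒜 ⊆ J ∧ ⋃₀ 𝒜 ∉ J ∧ Cardinal.mk 𝒜 = c}

/-- Covering number `cov(J)`: the least cardinality of a subfamily of `J` covering `Y`. -/
def covIdeal {Y : Type} (J : Set (Set Y)) : Cardinal :=
  sInf {c | ∃ 𝒜 : Set (Set Y), 𝒜 ⊆ J ∧ ⋃₀ 𝒜 = Set.univ ∧ Cardinal.mk 𝒜 = c}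

/-- Uniformity `non(J)`: the least cardinality of a subset of `Y` not in `J`. -/
def nonIdeal {Y : Type} (J : Set (Set Y)) : Cardinal :=
  sInf {c | ∃ S : Set Y, S ∉ J ∧ Cardinal.mk S = c}

/-- Cofinality `cof(J)`: the least cardinality of a cofinal (w.r.t. `⊆`) subfamily of `J`. -/
def cofIdeal {Y : Type} (J : Set (Set Y)) : Cardinal :=
  sInf {c | ∃ 𝒜 : Set (Set Y), 𝒜 ⊆ J ∧ (∀ B ∈ J, ∃ A ∈ 𝒜, B ⊆ A) ∧ Cardinal.mk 𝒜 = c}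

/-- `f ≤* g`: eventual domination on `ω^ω`. -/
def LeStar (f g : ℕ → ℕ) : Prop := ∀ᶠ n in atTop, f n ≤ g n

/-- The bounding number `𝔟`. -/
def bNum : Cardinal :=
  sInf {c | ∃ F : Set (ℕ → ℕ), (∀ g : ℕ → ℕ, ∃ f ∈ F, ¬ LeStar f g) ∧ Cardinal.mk F = c}

/-- The dominating number `𝔡`. -/
def dNum : Cardinal :=
  sInf {c | ∃ F : Set (ℕ → ℕ), (∀ f : ℕ → ℕ, ∃ g ∈ F, LeStar f g) ∧ Cardinal.mk F = c}

/-- `A ⊆* B`: almost inclusion (`A \ B` finite). -/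
def AlSub {X : Type} (A B : Set X) : Prop := (A \ B).Finite

/-- The set of cardinalities of witnessing families for `add*_ω(I)`: families `𝒜 ⊆ I`
such that for every countable `B̄ ⊆ I` some `A ∈ 𝒜` satisfies `A ⊄* B` for all `B ∈ B̄`.
`add*_ω(I)` is the minimum of this set (`∞` if it is empty). -/
def addStarOmegaFam {X : Type} (I : Set (Set X)) : Set Cardinal :=
  {c | ∃ 𝒜 : Set (Set X), 𝒜 ⊆ I ∧
    (∀ B : ℕ → Set X, (∀ n, B n ∈ I) → ∃ A ∈ 𝒜, ∀ n, ¬ AlSub A (B n)) ∧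
    Cardinal.mk 𝒜 = c}

/-- The set of cardinalities of witnessing families for `cof*_ω(I)`: families `𝒜` of
countable subsets of `I` such that for every countable `B̄ ⊆ I` there is `Ā ∈ 𝒜` with:
every `B ∈ B̄` satisfies `B ⊆* A` for some `A ∈ Ā`.  `cof*_ω(I)` is the minimum. -/
def cofStarOmegaFam {X : Type} (I : Set (Set X)) : Set Cardinal :=
  {c | ∃ 𝒜 : Set (Set (Set X)), (∀ As ∈ 𝒜, As.Countable ∧ As ⊆ I) ∧
    (∀ B : ℕ → Set X, (∀ n, B n ∈ I) → ∃ As ∈ 𝒜, ∀ n, ∃ A ∈ As, AlSub (B n) A) ∧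
    Cardinal.mk 𝒜 = c}

/-- The set of cardinalities of witnessing families for `non*_ω(I)`: families `𝒜` of
infinite subsets of `X` such that for every countable `B̄ ⊆ I` there is `A ∈ 𝒜` with
`A ∩ B` finite for all `B ∈ B̄`.  `non*_ω(I)` is the minimum of this set. -/
def nonStarOmegaFam {X : Type} (I : Set (Set X)) : Set Cardinal :=
  {c | ∃ 𝒜 : Set (Set X), (∀ A ∈ 𝒜, A.Infinite) ∧
    (∀ B : ℕ → Set X, (∀ n, B n ∈ I) → ∃ A ∈ 𝒜, ∀ n, (A ∩ B n).Finite) ∧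
    Cardinal.mk 𝒜 = c}

/-- The set of cardinalities of witnessing families for `cov*(I)`: families `𝒜 ⊆ I` such
that every infinite `B ⊆ X` has infinite intersection with some member of `𝒜`.
`cov*(I)` is the minimum of this set (`∞` if it is empty, i.e. if `I` is not tall). -/
def covStarFam {X : Type} (I : Set (Set X)) : Set Cardinal :=
  {c | ∃ 𝒜 : Set (Set X), 𝒜 ⊆ I ∧
    (∀ B : Set X, B.Infinite → ∃ A ∈ 𝒜, (A ∩ B).Infinite) ∧ Cardinal.mk 𝒜 = c}

/-- The set of cardinalities of witnessing families for `non*(I)`: families `𝒜` of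
infinite subsets of `X` such that every `B ∈ I` has finite intersection with some
member of `𝒜`.  `non*(I)` is the minimum of this set. -/
def nonStarFam {X : Type} (I : Set (Set X)) : Set Cardinal :=
  {c | ∃ 𝒜 : Set (Set X), (∀ A ∈ 𝒜, A.Infinite) ∧
    (∀ B ∈ I, ∃ A ∈ 𝒜, (A ∩ B).Finite) ∧ Cardinal.mk 𝒜 = c}

/-- The meager ideal of the product space `X^ω`, where `X` carries the discrete
topology (for countable `X` this is a Polish space). -/
def meagerIdeal (X : Type) : Set (Set (ℕ → X)) :=
  letI : TopologicalSpace X := ⊥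
  {A : Set (ℕ → X) | IsMeagre A}

/-- The Fubini product `I ⊗ J` of two ideals. -/
def Fubini {X Y : Type} (I : Set (Set X)) (J : Set (Set Y)) : Set (Set (X × Y)) :=
  {A | {x : X | {y : Y | (x, y) ∈ A} ∉ J} ∈ I}

/-- The ideal `Fin` of finite subsets of `X`. -/
def finIdeal (X : Type) : Set (Set X) := {A : Set X | A.Finite}

/-- The nowhere dense ideal on `2^{<ω}`: `A` belongs to it iff for every `s` there is an
extension `t ⊇ s` none of whose extensions belongs to `A`. -/
def nwdIdeal : Set (Set (List Bool)) :=
  {A | ∀ s : List Bool, ∃ t : List Bool, s <+: t ∧ ∀ u : List Bool, t <+: u → u ∉ A}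

/-- A submeasure: monotone, finitely subadditive, vanishing on `∅`. -/
def IsSubmeasure (φ : Set ℕ → ℝ≥0∞) : Prop :=
  φ ∅ = 0 ∧ (∀ A B : Set ℕ, A ⊆ B → φ A ≤ φ B) ∧ ∀ A B : Set ℕ, φ (A ∪ B) ≤ φ A + φ B

/-- `I` is gradually fragmented: there are a partition `⟨P n⟩` of `ω` into nonempty finite
sets and submeasures `φ n` with `A ∈ I ↔ sup_n φ n (A ∩ P n) < ∞`, together with
`f : ω → ω` such that for all `n, i`, for all but finitely many `j`: any family of at
most `i` subsets of `P j`, each of `φ j`-value `≤ n`, has union of `φ j`-value `≤ f n`. -/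
def GraduallyFragmented (I : Set (Set ℕ)) : Prop :=
  ∃ (P : ℕ → Set ℕ) (φ : ℕ → Set ℕ → ℝ≥0∞) (f : ℕ → ℕ),
    (∀ n, (P n).Finite) ∧ (∀ n, (P n).Nonempty) ∧
    (∀ n m, n ≠ m → Disjoint (P n) (P m)) ∧ (⋃ n, P n) = Set.univ ∧
    (∀ n, IsSubmeasure (φ n)) ∧
    (∀ A : Set ℕ, A ∈ I ↔ (⨆ n, φ n (A ∩ P n)) < ⊤) ∧
    (∀ n i : ℕ, ∀ᶠ j in atTop, ∀ ℬ : Finset (Set ℕ), ℬ.card ≤ i →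
      (∀ B ∈ ℬ, B ⊆ P j) → (∀ B ∈ ℬ, φ j B ≤ (n : ℝ≥0∞)) →
      φ j (⋃ B ∈ ℬ, B) ≤ ((f n : ℕ) : ℝ≥0∞))

/-- The basic clopen cylinder of `2^ω` determined by a finite binary string. -/
def cylSet (s : List Bool) : Set (ℕ → Bool) :=
  {x | ∀ i : Fin s.length, x i.val = s.get i}

/-- `A ⊆ 2^ω` is null for the uniform (coin-flipping) product measure: for every `ε > 0`
it is covered by countably many cylinders of total weight `≤ ε` (the cylinder of a
string `s` has weight `2^{-|s|}`). -/
def IsNullCantor (A : Set (ℕ → Bool)) : Prop :=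
  ∀ ε : ℝ≥0∞, 0 < ε → ∃ s : ℕ → List Bool,
    A ⊆ (⋃ n, cylSet (s n)) ∧ (∑' n : ℕ, (2⁻¹ : ℝ≥0∞) ^ (s n).length) ≤ ε

/-- Coordinatewise addition modulo 2 on `2^ω`. -/
def xorAdd (x y : ℕ → Bool) : ℕ → Bool := fun n => xor (x n) (y n)

/-- The transitive additivity `add_t(𝒩)` of the null ideal of `2^ω`:
`min {|A| : A ⊆ 2^ω ∧ ∃ X ∈ 𝒩, A + X ∉ 𝒩}`. -/
def addTNull : Cardinal :=
  sInf {c | ∃ A : Set (ℕ → Bool),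
    (∃ N : Set (ℕ → Bool), IsNullCantor N ∧ ¬ IsNullCantor (Set.image2 xorAdd A N)) ∧
    Cardinal.mk A = c}

/-- Kada's cardinal invariant `𝔩`: the least `κ` such that for every `g ∈ ω^ω` there is a
family `𝒮`, of size `κ`, of slaloms `S` with `S i ⊆ {0, …, g i}` and `|S i| ≤ i`, such
that every `f ≤* g` satisfies `f ∈* S` for some `S ∈ 𝒮`. -/
def lNum : Cardinal :=
  sInf {c : Cardinal | ∀ g : ℕ → ℕ, ∃ 𝒮 : Set (ℕ → Finset ℕ),
    (∀ S ∈ 𝒮, ∀ i : ℕ, S i ⊆ Finset.range (g i + 1) ∧ (S i).card ≤ i) ∧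
    (∀ f : ℕ → ℕ, LeStar f g → ∃ S ∈ 𝒮, ∀ᶠ i in atTop, f i ∈ S i) ∧
    Cardinal.mk 𝒮 = c}

/-- Membership in `C ⊆ 2^ω` only depends on the first `n` coordinates. -/
def DeterminedBy (C : Set (ℕ → Bool)) (n : ℕ) : Prop :=
  ∀ x y : ℕ → Bool, (∀ i < n, x i = y i) → (x ∈ C ↔ y ∈ C)

/-- Extension of a finite binary string by `false`s. -/
def extendFalse {n : ℕ} (s : Fin n → Bool) : ℕ → Bool :=
  fun i => if h : i < n then s ⟨i, h⟩ else false

/-- `C ⊆ 2^ω` has uniform product measure `1/2`: for some `n`, membership in `C` depends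
only on the first `n` coordinates and exactly half of the `2^n` cylinders of level `n`
are included in `C`. -/
def HalfMeasure (C : Set (ℕ → Bool)) : Prop :=
  ∃ n : ℕ, DeterminedBy C n ∧
    2 * Nat.card {s : Fin n → Bool // extendFalse s ∈ C} = 2 ^ n

/-- Clopenness in the Cantor space `2^ω` (`Bool` discrete, product topology). -/
def IsClopenCantor (C : Set (ℕ → Bool)) : Prop :=
  letI : TopologicalSpace Bool := ⊥
  IsClopen C

/-- Closedness in the Cantor space `2^ω`. -/
def IsClosedCantor (C : Set (ℕ → Bool)) : Prop :=
  letI : TopologicalSpace Bool := ⊥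
  IsClosed C

/-- `Ω`: the (countable) set of clopen subsets of `2^ω` of measure `1/2`. -/
abbrev SoleckiBase : Type := {C : Set (ℕ → Bool) // IsClopenCantor C ∧ HalfMeasure C}

/-- The Solecki ideal `𝒮` on `Ω`: the ideal generated by the sets
`I_y = {C ∈ Ω : y ∈ C}` for `y ∈ 2^ω`. -/
def SoleckiIdeal : Set (Set SoleckiBase) :=
  {A | ∃ F : Finset (ℕ → Bool), A ⊆ ⋃ y ∈ F, {C : SoleckiBase | y ∈ C.val}}

/-- `cov_ω(𝒩)`: the least cardinality of a family of Lebesgue-null sets of reals such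
that every countable set of reals is contained in one of them. -/
def covOmegaNull : Cardinal :=
  sInf {c | ∃ 𝒜 : Set (Set ℝ), (∀ N ∈ 𝒜, MeasureTheory.volume N = 0) ∧
    (∀ B : Set ℝ, B.Countable → ∃ N ∈ 𝒜, B ⊆ N) ∧ Cardinal.mk 𝒜 = c}

/-- `non(𝒩)`: the least cardinality of a non-null set of reals. -/
def nonNullReal : Cardinal :=
  sInf {c | ∃ S : Set ℝ, MeasureTheory.volume S ≠ 0 ∧ Cardinal.mk S = c}

/-- The eventually different ideal `ℰ𝒟` on `ω × ω`. -/
def EDIdeal : Set (Set (ℕ × ℕ)) :=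
  {A | ∃ k : ℕ, ∀ᶠ n in atTop,
    {m : ℕ | (n, m) ∈ A}.Finite ∧ {m : ℕ | (n, m) ∈ A}.ncard ≤ k}

/-- Characteristic function identifying `P(ω)` with `2^ω`. -/
def chiSet (A : Set ℕ) : ℕ → Bool :=
  fun n => @decide (n ∈ A) (Classical.propDecidable _)

/-- `I ⊆ P(ω)` is `F_σ`: under the identification `P(ω) ≅ 2^ω`, `I` is a countable
union of closed subsets of the Cantor space. -/
def IsFSigmaIdeal (I : Set (Set ℕ)) : Prop :=
  ∃ C : ℕ → Set (ℕ → Bool), (∀ n, IsClosedCantor (C n)) ∧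
    ∀ A : Set ℕ, A ∈ I ↔ chiSet A ∈ ⋃ n, C n

/-- The underlying countable set of `Fin^{⊗(n+1)}`: `FinPowType 0 = ω`,
`FinPowType (n+1) = ω × FinPowType n`. -/
def FinPowType : ℕ → Type
  | 0 => ℕ
  | n + 1 => ℕ × FinPowType n

/-- The iterated Fubini power of `Fin`: `FinPowIdeal 0 = Fin`, and
`FinPowIdeal (n+1) = Fin ⊗ FinPowIdeal n`; thus `Fin^{⊗k} = FinPowIdeal (k-1)`. -/
def FinPowIdeal : (n : ℕ) → Set (Set (FinPowType n))
  | 0 => finIdeal ℕ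
  | n + 1 => Fubini (finIdeal ℕ) (FinPowIdeal n)

/-- `π` `k`-constantly bounding-predicts `f`: for all but finitely many `i` there is
`j ∈ [i, i + k)` with `f j ≤ π (f ↾ j)`. -/
def ConstBddPred (k : ℕ) (π : List ℕ → ℕ) (f : ℕ → ℕ) : Prop :=
  ∀ᶠ i in atTop, ∃ j : ℕ, i ≤ j ∧ j < i + k ∧ f j ≤ π (seg f j)

/-- The constant bounding evasion number `𝔢^const_≤(k)`. -/
def eConstLe (k : ℕ) : Cardinal :=
  sInf {c | ∃ F : Set (ℕ → ℕ),
    (∀ π : List ℕ → ℕ, ∃ f ∈ F, ¬ ConstBddPred k π f) ∧ Cardinal.mk F = c}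

/-- The constant bounding prediction number `𝔳^const_≤(k)`. -/
def vConstLe (k : ℕ) : Cardinal :=
  sInf {c | ∃ Ps : Set (List ℕ → ℕ),
    (∀ f : ℕ → ℕ, ∃ π ∈ Ps, ConstBddPred k π f) ∧ Cardinal.mk Ps = c}

/-- The asymptotic density zero ideal `𝒵` on `ω`. -/
def densityZero : Set (Set ℕ) :=
  {A : Set ℕ | Tendsto (fun n : ℕ => ((A ∩ Iio n).ncard : ℝ) / (n : ℝ)) atTop (nhds (0 : ℝ))}

/-- The σ-ideal `ℰ` on `2^ω` generated by the closed null sets. -/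
def EIdeal : Set (Set (ℕ → Bool)) :=
  {A | ∃ C : ℕ → Set (ℕ → Bool),
    (∀ n, IsClosedCantor (C n) ∧ IsNullCantor (C n)) ∧ A ⊆ ⋃ n, C n}

/-! Identifying `X` with `ω`, the sequences eventually dominated by a fixed `g : ω → ω` form a
set in `K_I`, because finite sets belong to `I`; so a set outside `K_I` yields an unbounded
family and a dominating family yields a cover by sets in `K_I`. Next, `K_I ⊆ M_I`, and
`M_I ⊆ ℳ`: `M_φ` is the union over `k` of the closed sets `{x | ∀ m ≥ k, x m ∈ φ (x ↾ m)}`,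
which have empty interior because `X ∉ I`, so every initial segment can be extended by a value
outside `φ`. As `X^ω` is a Baire space, `X^ω ∉ ℳ`, and the middle inequalities follow by
monotonicity of `non` and `cov`. -/

namespace IsIdealOn

variable {X : Type} {I : Set (Set X)}

theorem infinite (hI : IsIdealOn I) : Infinite X :=
  not_finite_iff_infinite.mp fun _ => hI.proper (hI.finite_mem finite_univ)

theorem exists_notMem (hI : IsIdealOn I) {A : Set X} (hA : A ∈ I) : ∃ v, v ∉ A := by
  by_contra! h
  exact hI.proper (hI.subset_mem (fun v _ => h v) hA)

end IsIdealOn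

section Monotonicity

variable {Y : Type} {J₁ J₂ : Set (Set Y)}

theorem nonIdeal_mono (h : J₁ ⊆ J₂) (hJ₂ : ∃ S, S ∉ J₂) : nonIdeal J₁ ≤ nonIdeal J₂ := by
  obtain ⟨S, hS⟩ := hJ₂
  exact csInf_le_csInf' ⟨_, S, hS, rfl⟩ fun _ ⟨S, hS, hc⟩ => ⟨S, fun hS₁ => hS (h hS₁), hc⟩

theorem covIdeal_anti (h : J₁ ⊆ J₂) (hJ₁ : ∃ 𝒜 ⊆ J₁, ⋃₀ 𝒜 = Set.univ) :
    covIdeal J₂ ≤ covIdeal J₁ := by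
  obtain ⟨𝒜, h𝒜, hcov⟩ := hJ₁
  exact csInf_le_csInf' ⟨_, 𝒜, h𝒜, hcov, rfl⟩
    fun _ ⟨𝒜, h𝒜, hcov, hc⟩ => ⟨𝒜, h𝒜.trans h, hcov, hc⟩

end Monotonicity

theorem seg_congr {X : Type} {x y : ℕ → X} {m : ℕ} (h : ∀ i < m, x i = y i) :
    seg x m = seg y m :=
  List.map_congr_left fun i hi => h i (List.mem_range.mp hi)

theorem KIdeal_subset_MIdeal {X : Type} (I : Set (Set X)) : KIdeal I ⊆ MIdeal I := by
  rintro A ⟨φ, hφ, hA⟩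
  refine ⟨fun n s => φ n s.length, fun n s => hφ n s.length, hA.trans fun x hx => ?_⟩
  simpa [seg] using hx

section BaireSpace

open PiNat

variable {X : Type} [TopologicalSpace X] [DiscreteTopology X]

theorem isClopen_of_forall_mem_cylinder {S : Set (ℕ → X)} {n : ℕ}
    (hS : ∀ x ∈ S, cylinder x n ⊆ S) : IsClopen S := by
  have hS' : ∀ x ∉ S, cylinder x n ⊆ Sᶜ := fun x hx y hy hyS =>
    hx (hS y hyS ((mem_cylinder_comm x y n).mp hy))
  have isOpen_of {T : Set (ℕ → X)} (hT : ∀ x ∈ T, cylinder x n ⊆ T) : IsOpen T :=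
    isOpen_iff_forall_mem_open.mpr fun x hx =>
      ⟨_, hT x hx, isOpen_cylinder (fun _ => X) x n, self_mem_cylinder x n⟩
  exact ⟨⟨isOpen_of hS'⟩, isOpen_of hS⟩

theorem isNowhereDense_setOf_forall_mem_seg {φ : List X → Set X}
    (hφ : ∀ s, ∃ v, v ∉ φ s) (k : ℕ) :
    IsNowhereDense {x : ℕ → X | ∀ m, k ≤ m → x m ∈ φ (seg x m)} := by
  have hclosed : IsClosed {x : ℕ → X | ∀ m, k ≤ m → x m ∈ φ (seg x m)} := by
    simp only [ofPred_forall]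
    refine isClosed_iInter fun m => isClosed_iInter fun _ =>
      (isClopen_of_forall_mem_cylinder (n := m + 1) fun x hx y hy => ?_).isClosed
    have hyx := mem_cylinder_iff.mp hy
    rw [mem_ofPred_eq, hyx m m.lt_succ_self, seg_congr fun i hi => hyx i (hi.trans m.lt_succ_self)]
    exact hx
  rw [hclosed.isNowhereDense_iff, eq_empty_iff_forall_notMem]
  intro x hx
  obtain ⟨_, ⟨x', n, rfl⟩, hxn, hsub⟩ :=
    (isTopologicalBasis_cylinders (fun _ => X)).mem_nhds_iff.mp (isOpen_interior.mem_nhds hx)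
  rw [mem_cylinder_iff_eq] at hxn
  rw [← hxn] at hsub
  set m := max k n
  obtain ⟨v, hv⟩ := hφ (seg x m)
  have hy := update_mem_cylinder x m v
  have := interior_subset (hsub (cylinder_anti x (le_max_right k n) hy)) m (le_max_left k n)
  rw [Function.update_self, seg_congr fun i hi => mem_cylinder_iff.mp hy i hi] at this
  exact hv this

theorem isMeagre_setOf_eventually_mem_seg {φ : List X → Set X} (hφ : ∀ s, ∃ v, v ∉ φ s) :
    IsMeagre {x : ℕ → X | ∀ᶠ m in atTop, x m ∈ φ (seg x m)} := by
  simp only [eventually_atTop, ofPred_exists]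
  exact isMeagre_iUnion fun k => (isNowhereDense_setOf_forall_mem_seg hφ k).isMeagre

end BaireSpace

theorem MIdeal_subset_meagerIdeal {X : Type} {I : Set (Set X)} (hI : IsIdealOn I) :
    MIdeal I ⊆ meagerIdeal X := by
  let _ : TopologicalSpace X := ⊥
  have : DiscreteTopology X := ⟨rfl⟩
  rintro A ⟨φ, hφ, hA⟩
  exact (isMeagre_iUnion fun n =>
    isMeagre_setOf_eventually_mem_seg fun s => hI.exists_notMem (hφ n s)).mono hA

theorem univ_notMem_meagerIdeal (X : Type) [Nonempty X] : (univ : Set (ℕ → X)) ∉ meagerIdeal X := by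
  let _ : TopologicalSpace X := ⊥
  have : DiscreteTopology X := ⟨rfl⟩
  exact not_isMeagre_of_isOpen isOpen_univ univ_nonempty

section Domination

variable {X : Type} {I : Set (Set X)}

def dominatedBy (e : X ≃ ℕ) (g : ℕ → ℕ) : Set (ℕ → X) := {x | LeStar (e ∘ x) g}

theorem dominatedBy_mem_KIdeal (hI : IsIdealOn I) (e : X ≃ ℕ) (g : ℕ → ℕ) :
    dominatedBy e g ∈ KIdeal I :=
  ⟨fun _ m => e ⁻¹' Iic (g m), fun _ _ => hI.finite_mem ((finite_Iic _).preimage e.injective.injOn),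
    fun _ hx => mem_iUnion.mpr ⟨0, hx⟩⟩

theorem sUnion_image_dominatedBy (e : X ≃ ℕ) {F : Set (ℕ → ℕ)}
    (hF : ∀ f, ∃ g ∈ F, LeStar f g) : ⋃₀ (dominatedBy e '' F) = Set.univ :=
  eq_univ_of_forall fun x =>
    let ⟨_, hg, hxg⟩ := hF (e ∘ x)
    ⟨_, mem_image_of_mem _ hg, hxg⟩

theorem bNum_le_mk_of_notMem_KIdeal (hI : IsIdealOn I) (e : X ≃ ℕ) {S : Set (ℕ → X)}
    (hS : S ∉ KIdeal I) : bNum ≤ #S := by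
  refine le_trans (csInf_le' ?_) (mk_image_le (f := (e ∘ ·)) (s := S))
  refine ⟨_, fun g => ?_, rfl⟩
  by_contra! hg
  obtain ⟨φ, hφ, hcov⟩ := dominatedBy_mem_KIdeal hI e g
  have hSg : S ⊆ dominatedBy e g := fun x hx => hg _ (mem_image_of_mem _ hx)
  exact hS ⟨φ, hφ, hSg.trans hcov⟩

theorem covIdeal_KIdeal_le_mk (hI : IsIdealOn I) (e : X ≃ ℕ) {F : Set (ℕ → ℕ)}
    (hF : ∀ f, ∃ g ∈ F, LeStar f g) : covIdeal (KIdeal I) ≤ #F := by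
  refine le_trans (csInf_le' ?_) (mk_image_le (f := dominatedBy e) (s := F))
  exact ⟨_, image_subset_iff.mpr fun g _ => dominatedBy_mem_KIdeal hI e g,
    sUnion_image_dominatedBy e hF, rfl⟩

end Domination

/-- `𝔟 ≤ non(K_I) ≤ non(M_I) ≤ non(ℳ)` and
`cov(ℳ) ≤ cov(M_I) ≤ cov(K_I) ≤ 𝔡`, for the meager ideal `ℳ` of `X^ω`. -/
theorem stmt2 (X : Type) [Countable X] (I : Set (Set X)) (hI : IsIdealOn I) :
    bNum ≤ nonIdeal (KIdeal I) ∧ nonIdeal (KIdeal I) ≤ nonIdeal (MIdeal I) ∧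
    nonIdeal (MIdeal I) ≤ nonIdeal (meagerIdeal X) ∧
    covIdeal (meagerIdeal X) ≤ covIdeal (MIdeal I) ∧
    covIdeal (MIdeal I) ≤ covIdeal (KIdeal I) ∧ covIdeal (KIdeal I) ≤ dNum := by
  have : Infinite X := hI.infinite
  obtain ⟨e⟩ : Nonempty (X ≃ ℕ) := nonempty_equiv_of_countable
  have hKM := KIdeal_subset_MIdeal I
  have hMℳ := MIdeal_subset_meagerIdeal hI
  have hℳ : Set.univ ∉ meagerIdeal X := univ_notMem_meagerIdeal X
  have hK : Set.univ ∉ KIdeal I := fun h => hℳ (hMℳ (hKM h))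
  have hF : ∀ f, ∃ g ∈ (Set.univ : Set (ℕ → ℕ)), LeStar f g :=
    fun f => ⟨f, trivial, Eventually.of_forall fun _ => le_rfl⟩
  have hKcover : ∃ 𝒜 ⊆ KIdeal I, ⋃₀ 𝒜 = Set.univ :=
    ⟨_, image_subset_iff.mpr fun g _ => dominatedBy_mem_KIdeal hI e g,
      sUnion_image_dominatedBy e hF⟩
  refine ⟨le_csInf ⟨_, _, hK, rfl⟩ ?_, nonIdeal_mono hKM ⟨_, fun h => hℳ (hMℳ h)⟩,
    nonIdeal_mono hMℳ ⟨_, hℳ⟩, covIdeal_anti hMℳ (hKcover.imp fun _ h => ⟨h.1.trans hKM, h.2⟩),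
    covIdeal_anti hKM hKcover, le_csInf ⟨_, _, hF, rfl⟩ ?_⟩
  · rintro _ ⟨S, hS, rfl⟩
    exact bNum_le_mk_of_notMem_KIdeal hI e hS
  · rintro _ ⟨F, hF, rfl⟩
    exact covIdeal_KIdeal_le_mk hI e hF

end
end

section
/- For every ideal I on a countable set X, non(M_I) ≤ max{𝔟, non*_ω(I)} and cov(M_I) ≥ min{𝔡, cov*(I)} (with the convention cov*(I) = ∞ when I is not tall). -/
open Cardinal Filter Set
open scoped ENNReal

noncomputable section

/-! Write `e_A : ℕ → X` for an enumeration of an infinite `A ⊆ X`. If `A` is almost disjoint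
from every value of `φ : X^{<ω} → I`, the branches of `M_φ` that stay in `A` form a finitely
branching tree above each node, so `{f | e_A ∘ f ∈ M_φ}` is `σ`-bounded in `(ω^ω, ≤*)`. Hence
the `𝔟 · non*_ω(I)` reals `e_A ∘ f`, with `f` from an unbounded family and `A` from a
`non*_ω(I)`-family, are not covered by countably many `M_φ`. Dually, given a cover of `X^ω`
by `κ` sets in `M_I`, either the `κ · ℵ₀` values of their generators form a `cov*(I)`-family,
or some infinite `B` is almost disjoint from all of them, and the tree bounds along `e_B` give
a dominating family of size `κ`. -/

section MillerSets

variable {X Y : Type}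

def millerSet (φ : List X → Set X) : Set (ℕ → X) :=
  {x | ∀ᶠ m in atTop, x m ∈ φ (seg x m)}

lemma seg_succ (x : ℕ → X) (n : ℕ) : seg x (n + 1) = seg x n ++ [x n] := by
  simp [seg, List.range_succ]

lemma seg_length (x : ℕ → X) (n : ℕ) : (seg x n).length = n := by
  simp [seg]

lemma seg_comp (e : Y → X) (f : ℕ → Y) (n : ℕ) : seg (e ∘ f) n = (seg f n).map e := by
  simp [seg]

lemma comp_mem_millerSet_iff (e : Y → X) (f : ℕ → Y) (φ : List X → Set X) :
    e ∘ f ∈ millerSet φ ↔ f ∈ millerSet (fun u => e ⁻¹' φ (u.map e)) := by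
  simp [millerSet, seg_comp]

lemma exists_eq_apply_seg (g : List X → X) : ∃ z : ℕ → X, ∀ m, z m = g (seg z m) := by
  let L : ℕ → List X := fun n => Nat.rec [] (fun _ l => l ++ [g l]) n
  have hL : ∀ n, seg (fun m => g (L m)) n = L n := by
    intro n
    induction n with
    | zero => rfl
    | succ n ih => rw [seg_succ, ih]
  exact ⟨fun m => g (L m), fun m => by rw [hL]⟩

def millerReach (ψ : List Y → Set Y) (s : List Y) : ℕ → Set (List Y)
  | 0 => {s}
  | j + 1 => ⋃ t ∈ millerReach ψ s j, (fun a => t ++ [a]) '' ψ t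

lemma millerReach_finite {ψ : List Y → Set Y} (hψ : ∀ t, (ψ t).Finite) (s : List Y) :
    ∀ j, (millerReach ψ s j).Finite
  | 0 => finite_singleton s
  | j + 1 => (millerReach_finite hψ s j).biUnion fun t _ => (hψ t).image _

lemma seg_mem_millerReach {ψ : List Y → Set Y} {f : ℕ → Y} {N : ℕ}
    (hN : ∀ m ≥ N, f m ∈ ψ (seg f m)) (j : ℕ) : seg f (N + j) ∈ millerReach ψ (seg f N) j := by
  induction j with
  | zero => exact mem_singleton _
  | succ j ih =>
    rw [← add_assoc, seg_succ]
    exact mem_biUnion ih ⟨f (N + j), hN _ (Nat.le_add_right N j), rfl⟩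

lemma exists_leStar_of_mem_millerSet (ψ : List ℕ → Set ℕ) (hψ : ∀ u, (ψ u).Finite) :
    ∃ G : ℕ × List ℕ → ℕ → ℕ, ∀ f ∈ millerSet ψ, ∃ p, LeStar f (G p) := by
  refine ⟨fun p m => sSup (⋃ t ∈ millerReach ψ p.2 (m - p.1), ψ t), fun f hf => ?_⟩
  obtain ⟨N, hN⟩ := eventually_atTop.1 hf
  refine ⟨(N, seg f N), eventually_atTop.2 ⟨N, fun m hm => le_csSup ?_ ?_⟩⟩
  · exact ((millerReach_finite hψ _ _).biUnion fun t _ => hψ t).bddAbove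
  · have hreach := seg_mem_millerReach hN (m - N)
    rw [Nat.add_sub_cancel' hm] at hreach
    exact mem_biUnion hreach (hN m hm)

lemma exists_leStar_of_comp_mem_iUnion_millerSet (φ : ℕ → List X → Set X) (e : ℕ → X)
    (hφ : ∀ n s, (e ⁻¹' φ n s).Finite) :
    ∃ G : ℕ × ℕ × List ℕ → ℕ → ℕ,
      ∀ f, e ∘ f ∈ ⋃ n, millerSet (φ n) → ∃ p, LeStar f (G p) := by
  choose G hG using fun n => exists_leStar_of_mem_millerSet _ fun u => hφ n (u.map e)
  refine ⟨fun p => G p.1 p.2, fun f hf => ?_⟩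
  obtain ⟨n, hn⟩ := mem_iUnion.1 hf
  obtain ⟨p, hp⟩ := hG n f ((comp_mem_millerSet_iff e f (φ n)).1 hn)
  exact ⟨(n, p), hp⟩

end MillerSets

lemma LeStar.trans {f g h : ℕ → ℕ} (hfg : LeStar f g) (hgh : LeStar g h) : LeStar f h :=
  (hfg.and hgh).mono fun _ hm => hm.1.trans hm.2

lemma exists_forall_leStar {ι : Type} [Countable ι] (g : ι → ℕ → ℕ) :
    ∃ h, ∀ i, LeStar (g i) h := by
  rcases isEmpty_or_nonempty ι with hι | hι
  · exact ⟨0, fun i => isEmptyElim i⟩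
  obtain ⟨σ, hσ⟩ := exists_surjective_nat ι
  refine ⟨fun m => (Finset.range (m + 1)).sup fun k => g (σ k) m, fun i => ?_⟩
  obtain ⟨k, rfl⟩ := hσ i
  exact eventually_atTop.2 ⟨k, fun m hm =>
    Finset.le_sup (f := fun k => g (σ k) m) (Finset.mem_range.2 (Nat.lt_succ_of_le hm))⟩

lemma exists_unbounded_mk_eq_bNum :
    ∃ F : Set (ℕ → ℕ), (∀ g, ∃ f ∈ F, ¬ LeStar f g) ∧ #F = bNum := by
  refine csInf_mem (show Set.Nonempty {c | ∃ F : Set (ℕ → ℕ),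
    (∀ g, ∃ f ∈ F, ¬ LeStar f g) ∧ #F = c} from
    ⟨_, Set.univ, fun g => ⟨g + 1, trivial, fun h => ?_⟩, rfl⟩)
  obtain ⟨n, hn⟩ := h.exists
  exact Nat.not_succ_le_self _ hn

lemma aleph0_le_bNum : ℵ₀ ≤ bNum := by
  obtain ⟨F, hF, hFcard⟩ := exists_unbounded_mk_eq_bNum
  by_contra! hlt
  have : Countable F := (lt_aleph0_iff_set_finite.1 (hFcard ▸ hlt)).countable.to_subtype
  obtain ⟨h, hh⟩ := exists_forall_leStar fun f : F => (f : ℕ → ℕ)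
  obtain ⟨f, hf, hfh⟩ := hF h
  exact hfh (hh ⟨f, hf⟩)

lemma Set.Infinite.exists_seq_preimage_finite {X : Type} {A : Set X} (hA : A.Infinite) :
    ∃ e : ℕ → X, ∀ C, (A ∩ C).Finite → (e ⁻¹' C).Finite := by
  refine ⟨fun k => hA.natEmbedding A k, fun C hC => ?_⟩
  have hinj : Function.Injective fun k => (hA.natEmbedding A k : X) :=
    Subtype.val_injective.comp (hA.natEmbedding A).injective
  exact (hC.preimage hinj.injOn).subset fun k hk => mem_inter (hA.natEmbedding A k).2 hk

lemma mk_range_le_of_aleph0_le {α ι β : Type} [Countable ι] (g : α × ι → β) (hα : ℵ₀ ≤ #α) :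
    #(range g) ≤ #α := by
  refine mk_range_le.trans ?_
  rw [mk_prod, lift_id, lift_id]
  exact (mul_le_mul_right mk_le_aleph0 _).trans (mul_eq_left hα hα aleph0_ne_zero).le

namespace IsIdealOn

variable {X : Type} {I : Set (Set X)}

lemma exists_not_mem (hI : IsIdealOn I) {A : Set X} (hA : A ∈ I) : ∃ a, a ∉ A := by
  by_contra! h
  exact hI.proper (eq_univ_of_forall h ▸ hA)

lemma nonempty (hI : IsIdealOn I) : Nonempty X :=
  let ⟨a, _⟩ := hI.exists_not_mem (hI.finite_mem finite_empty)
  ⟨a⟩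

lemma biUnion_mem (hI : IsIdealOn I) {ι : Type} (s : Finset ι) {f : ι → Set X}
    (hf : ∀ i ∈ s, f i ∈ I) : ⋃ i ∈ s, f i ∈ I := by
  classical
  induction s using Finset.induction_on with
  | empty => simpa using hI.finite_mem finite_empty
  | insert i s _ ih =>
    rw [Finset.set_biUnion_insert]
    exact hI.union_mem (hf i (Finset.mem_insert_self i s))
      (ih fun j hj => hf j (Finset.mem_insert_of_mem hj))

lemma exists_seq_forall_not_mem (hI : IsIdealOn I) (Ψ : ℕ → List X → Set X)
    (hΨ : ∀ k s, Ψ k s ∈ I) : ∃ z : ℕ → X, ∀ k m, k ≤ m → z m ∉ Ψ k (seg z m) := by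
  choose g hg using fun s : List X =>
    hI.exists_not_mem (hI.biUnion_mem (Finset.range (s.length + 1)) fun k _ => hΨ k s)
  obtain ⟨z, hz⟩ := exists_eq_apply_seg g
  refine ⟨z, fun k m hkm hmem => hg (seg z m) ?_⟩
  rw [← hz, seg_length]
  exact mem_biUnion (Finset.mem_range.2 (Nat.lt_succ_of_le hkm)) hmem

lemma exists_infinite_forall_inter_finite (hI : IsIdealOn I) (B : ℕ → Set X)
    (hB : ∀ n, B n ∈ I) : ∃ A : Set X, A.Infinite ∧ ∀ n, (A ∩ B n).Finite := by
  obtain ⟨z, hz⟩ := hI.exists_seq_forall_not_mem (fun k s => B k ∪ {a | a ∈ s})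
    fun k s => hI.union_mem (hB k) (hI.finite_mem s.finite_toSet)
  have hmem_seg : ∀ i j, i < j → z i ∈ seg z j := fun i j h =>
    List.mem_map.2 ⟨i, List.mem_range.2 h, rfl⟩
  have hinj : Function.Injective z := by
    intro i j hij
    by_contra hne
    rcases Nat.lt_or_gt_of_ne hne with h | h
    · exact hz 0 j (Nat.zero_le _) (Or.inr (hij ▸ hmem_seg i j h))
    · exact hz 0 i (Nat.zero_le _) (Or.inr (hij ▸ hmem_seg j i h))
  refine ⟨range z, infinite_range_of_injective hinj, fun n => ?_⟩
  refine ((finite_Iio n).image z).subset ?_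
  rintro _ ⟨⟨m, rfl⟩, hm⟩
  exact ⟨m, not_le.1 fun hnm => hz n m hnm (Or.inl hm), rfl⟩

lemma singleton_mem_MIdeal (hI : IsIdealOn I) (x : ℕ → X) : {x} ∈ MIdeal I := by
  refine ⟨fun _ s => {x s.length}, fun _ _ => hI.finite_mem (finite_singleton _), ?_⟩
  rintro _ rfl
  exact mem_iUnion.2 ⟨0, Eventually.of_forall fun m => by simp [seg_length]⟩

lemma sUnion_ne_univ (hI : IsIdealOn I) {𝒰 : Set (Set (ℕ → X))} (h𝒰 : 𝒰 ⊆ MIdeal I)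
    (hc : 𝒰.Countable) : ⋃₀ 𝒰 ≠ Set.univ := by
  intro hcover
  choose φ hφI hφ using fun U : 𝒰 => h𝒰 U.2
  have := hI.nonempty
  obtain ⟨U, hU, -⟩ := mem_sUnion.1 (hcover ▸ mem_univ fun _ => Classical.arbitrary X)
  have : Countable 𝒰 := hc.to_subtype
  have : Nonempty 𝒰 := ⟨⟨U, hU⟩⟩
  obtain ⟨σ, hσ⟩ := exists_surjective_nat (𝒰 × ℕ)
  obtain ⟨z, hz⟩ := hI.exists_seq_forall_not_mem (fun k => φ (σ k).1 (σ k).2)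
    fun k s => hφI _ _ s
  obtain ⟨V, hV, hzV⟩ := mem_sUnion.1 (hcover ▸ mem_univ z)
  obtain ⟨n, hn⟩ := mem_iUnion.1 (hφ ⟨V, hV⟩ hzV)
  obtain ⟨k, hk⟩ := hσ (⟨V, hV⟩, n)
  obtain ⟨m, hm, hkm⟩ := (hn.and (eventually_ge_atTop k)).exists
  exact hz k m hkm (hk ▸ hm)

end IsIdealOn

section CardinalBounds

variable {X : Type} {I : Set (Set X)}

lemma image2_comp_not_mem_MIdeal [Countable X] {F : Set (ℕ → ℕ)}
    (hF : ∀ g, ∃ f ∈ F, ¬ LeStar f g)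
    {𝒜 : Set (Set X)} (h𝒜 : ∀ B : ℕ → Set X, (∀ n, B n ∈ I) → ∃ A ∈ 𝒜, ∀ n, (A ∩ B n).Finite)
    (e : Set X → ℕ → X) (he : ∀ A ∈ 𝒜, ∀ C, (A ∩ C).Finite → (e A ⁻¹' C).Finite) :
    image2 (fun A f => e A ∘ f) 𝒜 F ∉ MIdeal I := by
  rintro ⟨φ, hφI, hcover⟩
  obtain ⟨σ, hσ⟩ := exists_surjective_nat (ℕ × List X)
  obtain ⟨A, hA, hAφ⟩ := h𝒜 (fun k => φ (σ k).1 (σ k).2) fun k => hφI _ _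
  have hfin : ∀ n s, (e A ⁻¹' φ n s).Finite := fun n s => by
    obtain ⟨k, hk⟩ := hσ (n, s)
    have hAk := hAφ k
    rw [hk] at hAk
    exact he A hA _ hAk
  obtain ⟨G, hG⟩ := exists_leStar_of_comp_mem_iUnion_millerSet φ (e A) hfin
  obtain ⟨h, hh⟩ := exists_forall_leStar G
  obtain ⟨f, hf, hfh⟩ := hF h
  obtain ⟨p, hp⟩ := hG f (hcover (mem_image2_of_mem hA hf))
  exact hfh (hp.trans (hh p))

lemma nonIdeal_MIdeal_le [Countable X] (hI : IsIdealOn I) :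
    nonIdeal (MIdeal I) ≤ max bNum (sInf (nonStarOmegaFam I)) := by
  obtain ⟨F, hF, hFcard⟩ := exists_unbounded_mk_eq_bNum
  have hne : (nonStarOmegaFam I).Nonempty :=
    ⟨_, {A | A.Infinite}, fun _ hA => hA, hI.exists_infinite_forall_inter_finite, rfl⟩
  obtain ⟨𝒜, h𝒜inf, h𝒜, h𝒜card⟩ := csInf_mem hne
  have := hI.nonempty
  choose! e he using fun A (hA : A ∈ 𝒜) => (h𝒜inf A hA).exists_seq_preimage_finite
  calc nonIdeal (MIdeal I)
      ≤ #(image2 (fun A f => e A ∘ f) 𝒜 F) :=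
        csInf_le' ⟨_, image2_comp_not_mem_MIdeal hF h𝒜 e he, rfl⟩
    _ ≤ #𝒜 * #F := mk_image2_le
    _ ≤ max bNum (sInf (nonStarOmegaFam I)) := by
        rw [h𝒜card, hFcard, mul_comm]
        exact mul_le_max_of_aleph0_le_left aleph0_le_bNum

lemma dNum_le_mk_of_sUnion_eq_univ {𝒰 : Set (Set (ℕ → X))} (hcover : ⋃₀ 𝒰 = Set.univ)
    (h𝒰 : ℵ₀ ≤ #𝒰)
    (ψ : 𝒰 → ℕ → List X → Set X) (hψ : ∀ U : 𝒰, (U : Set (ℕ → X)) ⊆ ⋃ n, millerSet (ψ U n))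
    {B : Set X} (hB : B.Infinite) (hBψ : ∀ U n s, (B ∩ ψ U n s).Finite) : dNum ≤ #𝒰 := by
  obtain ⟨e, he⟩ := hB.exists_seq_preimage_finite
  choose G hG using fun U =>
    exists_leStar_of_comp_mem_iUnion_millerSet (ψ U) e fun n s => he _ (hBψ U n s)
  have hdom : ∀ f, ∃ g ∈ range fun q : 𝒰 × (ℕ × ℕ × List ℕ) => G q.1 q.2, LeStar f g := by
    intro f
    obtain ⟨U, hU, hfU⟩ := mem_sUnion.1 (hcover ▸ mem_univ (e ∘ f))
    obtain ⟨p, hp⟩ := hG ⟨U, hU⟩ f (hψ ⟨U, hU⟩ hfU)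
    exact ⟨_, mem_range_self (⟨U, hU⟩, p), hp⟩
  exact le_trans (csInf_le' ⟨_, hdom, rfl⟩) (mk_range_le_of_aleph0_le _ h𝒰)

lemma le_covIdeal_MIdeal [Countable X] (hI : IsIdealOn I) :
    sInf (insert dNum (covStarFam I)) ≤ covIdeal (MIdeal I) := by
  obtain ⟨𝒰, h𝒰M, hcover, h𝒰card⟩ : ∃ 𝒰 : Set (Set (ℕ → X)),
      𝒰 ⊆ MIdeal I ∧ ⋃₀ 𝒰 = Set.univ ∧ #𝒰 = covIdeal (MIdeal I) :=
    csInf_mem (show Set.Nonempty {c | ∃ 𝒰 : Set (Set (ℕ → X)),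
      𝒰 ⊆ MIdeal I ∧ ⋃₀ 𝒰 = Set.univ ∧ #𝒰 = c} from
      ⟨_, range fun x => {x}, range_subset_iff.2 hI.singleton_mem_MIdeal,
        sUnion_eq_univ_iff.2 fun x => ⟨{x}, mem_range_self x, rfl⟩, rfl⟩)
  have h𝒰 : ℵ₀ ≤ #𝒰 := by
    by_contra! hlt
    exact hI.sUnion_ne_univ h𝒰M (lt_aleph0_iff_set_finite.1 hlt).countable hcover
  choose ψ hψI hψ using fun U : 𝒰 => h𝒰M U.2
  rw [← h𝒰card]
  by_cases hB : ∃ B : Set X, B.Infinite ∧ ∀ U n s, (B ∩ ψ U n s).Finite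
  · obtain ⟨B, hB, hBψ⟩ := hB
    exact (csInf_le' (mem_insert _ _)).trans
      (dNum_le_mk_of_sUnion_eq_univ hcover h𝒰 ψ hψ hB hBψ)
  · push Not at hB
    refine le_trans (csInf_le' (mem_insert_of_mem _ ⟨_, ?_, ?_, rfl⟩))
      (mk_range_le_of_aleph0_le (fun q : 𝒰 × ℕ × List X => ψ q.1 q.2.1 q.2.2) h𝒰)
    · exact range_subset_iff.2 fun q => hψI _ _ _
    · intro B hBinf
      obtain ⟨U, n, s, hinf⟩ := hB B hBinf
      exact ⟨_, mem_range_self (U, n, s), inter_comm B _ ▸ hinf⟩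

end CardinalBounds

/-- `non(M_I) ≤ max {𝔟, non*_ω(I)}` and
`cov(M_I) ≥ min {𝔡, cov*(I)}` (`min` with the convention `cov*(I) = ∞` when `I` is not
tall is rendered as `sInf (insert dNum (covStarFam I))`). -/
theorem stmt3 (X : Type) [Countable X] (I : Set (Set X)) (hI : IsIdealOn I) :
    nonIdeal (MIdeal I) ≤ max bNum (sInf (nonStarOmegaFam I)) ∧
    sInf (insert dNum (covStarFam I)) ≤ covIdeal (MIdeal I) :=
  ⟨nonIdeal_MIdeal_le hI, le_covIdeal_MIdeal hI⟩
end
end
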